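/- Let A = (a_1, …, a_5) be 5 sequences in ℤ^ℓ and let x be a sum-MSC sequence for A. Then for all columns j and j', G_j(x) ∩ G_{j'}(x) ≠ ∅. -/

import Mathlib

/-- `a i` governs `x j` (w.r.t. the column medians `m`): `x j` is in the center,
or moving `x j` towards the center increases the distance to `a i`. -/
def Governs {ℓ : ℕ} (a : Fin 5 → Fin ℓ → ℤ) (m x : Fin ℓ → ℤ) (j : Fin ℓ) (i : Fin 5) : Prop :=
  x j = m j ∨ (x j < m j ∧ a i j ≤ x j) ∨ (m j < x j ∧ x j ≤ a i j)

/-- `G_j(x)`: the set of indices `i` such that `a i` governs `x j`. -/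
def GovSet {ℓ : ℕ} (a : Fin 5 → Fin ℓ → ℤ) (m x : Fin ℓ → ℤ) (j : Fin ℓ) : Set (Fin 5) :=
  {i | Governs a m x j i}

/-- Manhattan distance between two integer sequences of length `ℓ`. -/
def manhattanDist {ℓ : ℕ} (x y : Fin ℓ → ℤ) : ℤ := ∑ j, |x j - y j|

/-- Manhattan distance from a sequence to a collection of 5 sequences. -/
def manhattanDistA {ℓ : ℕ} (a : Fin 5 → Fin ℓ → ℤ) (x : Fin ℓ → ℤ) : ℤ :=
  Finset.univ.sup' ⟨0, Finset.mem_univ _⟩ fun i => manhattanDist x (a i)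

/-- `OPT(A)`: the optimal (minimal) distance to the collection. -/
noncomputable def manhattanOPT {ℓ : ℕ} (a : Fin 5 → Fin ℓ → ℤ) : ℤ :=
  sInf {d : ℤ | ∃ x : Fin ℓ → ℤ, manhattanDistA a x = d}

/-- A sum-MSC sequence: a Manhattan consensus sequence minimizing the sum of
distances among all Manhattan consensus sequences. -/
def IsSumMSC {ℓ : ℕ} (a : Fin 5 → Fin ℓ → ℤ) (x : Fin ℓ → ℤ) : Prop :=
  manhattanDistA a x = manhattanOPT a ∧
    ∀ y : Fin ℓ → ℤ, manhattanDistA a y = manhattanOPT a →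
      (∑ i, manhattanDist x (a i)) ≤ ∑ i, manhattanDist y (a i)

/-!
Moving `x j` one step towards the median `m j` changes `dist(x, a i)` by `+1` if `a i` governs
`x j` and by `-1` otherwise, and off the median at most two of the five sequences govern `x j`.
So if `G_j(x)` were empty the step would decrease every distance, contradicting `dist(x, A) = OPT`;
and if `G_j(x)` and `G_{j'}(x)` were disjoint for `j ≠ j'`, stepping both columns would increase
no distance but would decrease the sum of distances, contradicting sum-minimality.
-/

open Finset

lemma card_filter_lt_apply_le {α : Type*} [LinearOrder α] {n : ℕ} (f : Fin n → α)
    (σ : Equiv.Perm (Fin n)) (hσ : Monotone fun p => f (σ p)) (k : Fin n) :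
    #{i | f i < f (σ k)} ≤ k := by
  calc #{i | f i < f (σ k)} ≤ #((Iio k).map σ.toEmbedding) := by
        refine card_le_card fun i hi => ?_
        rw [mem_filter] at hi
        rw [mem_map_equiv, mem_Iio]
        by_contra! hk
        exact (hσ hk).not_gt (by simpa using hi.2)
    _ = k := by rw [card_map, Fin.card_Iio]

lemma card_filter_apply_lt_le {α : Type*} [LinearOrder α] {n : ℕ} (f : Fin n → α)
    (σ : Equiv.Perm (Fin n)) (hσ : Monotone fun p => f (σ p)) (k : Fin n) :
    #{i | f (σ k) < f i} ≤ n - 1 - k := by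
  have hσ' : Monotone fun p : Fin n => OrderDual.toDual (f (σ p.rev)) :=
    fun p q hpq => OrderDual.toDual_le_toDual.mpr (hσ (Fin.rev_le_rev.mpr hpq))
  have h := card_filter_lt_apply_le (fun i => OrderDual.toDual (f i)) (Fin.revPerm.trans σ) hσ'
    k.rev
  simp only [Equiv.trans_apply, Fin.revPerm_apply, Fin.rev_rev, Fin.val_rev,
    OrderDual.toDual_lt_toDual] at h
  omega

lemma sum_ite_one_neg_one {ι : Type*} [Fintype ι] (p : ι → Prop) [DecidablePred p] :
    ∑ i, (if p i then 1 else -1 : ℤ) = 2 * #{i | p i} - Fintype.card ι := by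
  have h : ∀ i, (if p i then 1 else -1 : ℤ) = 2 * (if p i then 1 else 0) - 1 := by
    intro i; split_ifs <;> norm_num
  simp only [h, sum_sub_distrib, ← mul_sum, sum_boole, sum_const, card_univ, nsmul_eq_mul,
    mul_one]

section Manhattan

variable {ℓ : ℕ}

lemma manhattanDist_update (x b : Fin ℓ → ℤ) (j : Fin ℓ) (v : ℤ) :
    manhattanDist (Function.update x j v) b = manhattanDist x b + (|v - b j| - |x j - b j|) := by
  unfold manhattanDist
  rw [← add_sum_erase _ _ (mem_univ j), ← add_sum_erase _ _ (mem_univ j),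
    sum_congr rfl fun k hk => by rw [Function.update_of_ne (ne_of_mem_erase hk)]]
  simp only [Function.update_self]
  ring

lemma manhattanDist_le_manhattanDistA (a : Fin 5 → Fin ℓ → ℤ) (x : Fin ℓ → ℤ) (i : Fin 5) :
    manhattanDist x (a i) ≤ manhattanDistA a x :=
  le_sup' (fun i => manhattanDist x (a i)) (mem_univ i)

lemma manhattanDistA_le_add {a : Fin 5 → Fin ℓ → ℤ} {x y : Fin ℓ → ℤ} {c : ℤ}
    (h : ∀ i, manhattanDist y (a i) ≤ manhattanDist x (a i) + c) :
    manhattanDistA a y ≤ manhattanDistA a x + c :=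
  sup'_le _ _ fun i _ => (h i).trans (by gcongr; exact manhattanDist_le_manhattanDistA a x i)

lemma manhattanOPT_le (a : Fin 5 → Fin ℓ → ℤ) (y : Fin ℓ → ℤ) :
    manhattanOPT a ≤ manhattanDistA a y := by
  refine csInf_le ⟨0, ?_⟩ ⟨y, rfl⟩
  rintro d ⟨z, rfl⟩
  exact (sum_nonneg fun _ _ => abs_nonneg _).trans (manhattanDist_le_manhattanDistA a z 0)

instance (a : Fin 5 → Fin ℓ → ℤ) (m x : Fin ℓ → ℤ) (j : Fin ℓ) :
    DecidablePred (Governs a m x j) := fun _ => by unfold Governs; infer_instance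

lemma governs_congr {a : Fin 5 → Fin ℓ → ℤ} {m x y : Fin ℓ → ℤ} {j : Fin ℓ} (h : x j = y j)
    (i : Fin 5) : Governs a m x j i ↔ Governs a m y j i := by
  simp only [Governs, h]

lemma card_governs_le_two (a : Fin 5 → Fin ℓ → ℤ) (π : Fin ℓ → Equiv.Perm (Fin 5))
    (hπ : ∀ j, Monotone fun p => a (π j p) j) (m : Fin ℓ → ℤ) (hm : ∀ j, m j = a (π j 2) j)
    (x : Fin ℓ → ℤ) (j : Fin ℓ) (hne : x j ≠ m j) :
    #{i | Governs a m x j i} ≤ 2 := by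
  have hmj := hm j
  rcases hne.lt_or_gt with h | h
  · calc #{i | Governs a m x j i} ≤ #{i | a i j < a (π j 2) j} := by
          refine card_le_card fun i => ?_
          simp only [mem_filter, mem_univ, true_and]
          rintro (_ | ⟨_, _⟩ | ⟨_, _⟩) <;> omega
      _ ≤ 2 := card_filter_lt_apply_le (fun i => a i j) (π j) (hπ j) 2
  · calc #{i | Governs a m x j i} ≤ #{i | a (π j 2) j < a i j} := by
          refine card_le_card fun i => ?_
          simp only [mem_filter, mem_univ, true_and]
          rintro (_ | ⟨_, _⟩ | ⟨_, _⟩) <;> omega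
      _ ≤ 2 := card_filter_apply_lt_le (fun i => a i j) (π j) (hπ j) 2

def stepToMedian (m x : Fin ℓ → ℤ) (j : Fin ℓ) : Fin ℓ → ℤ :=
  Function.update x j (x j + Int.sign (m j - x j))

lemma manhattanDist_stepToMedian (a : Fin 5 → Fin ℓ → ℤ) (m x : Fin ℓ → ℤ) (j : Fin ℓ)
    (hne : x j ≠ m j) (i : Fin 5) :
    manhattanDist (stepToMedian m x j) (a i) =
      manhattanDist x (a i) + if Governs a m x j i then 1 else -1 := by
  rw [stepToMedian, manhattanDist_update]
  congr 1
  unfold Governs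
  rcases hne.lt_or_gt with h | h
  · rw [Int.sign_eq_one_of_pos (by omega)]
    split_ifs <;> simp only [abs_eq_max_neg] <;> omega
  · rw [Int.sign_eq_neg_one_of_neg (by omega)]
    split_ifs <;> simp only [abs_eq_max_neg] <;> omega

lemma exists_governs_of_manhattanDistA_eq {a : Fin 5 → Fin ℓ → ℤ} {m x : Fin ℓ → ℤ}
    (hx : manhattanDistA a x = manhattanOPT a) (j : Fin ℓ) : ∃ i, Governs a m x j i := by
  by_cases hj : x j = m j
  · exact ⟨0, Or.inl hj⟩
  by_contra! hG
  have hstep : manhattanDistA a (stepToMedian m x j) ≤ manhattanDistA a x + -1 :=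
    manhattanDistA_le_add fun i => by rw [manhattanDist_stepToMedian a m x j hj, if_neg (hG i)]
  linarith [manhattanOPT_le a (stepToMedian m x j)]

lemma exists_governs_and_governs_of_isSumMSC (a : Fin 5 → Fin ℓ → ℤ)
    (π : Fin ℓ → Equiv.Perm (Fin 5)) (hπ : ∀ j, Monotone fun p => a (π j p) j)
    (m : Fin ℓ → ℤ) (hm : ∀ j, m j = a (π j 2) j) {x : Fin ℓ → ℤ} (hx : IsSumMSC a x)
    {j j' : Fin ℓ} (hjj' : j ≠ j') (hj : x j ≠ m j) (hj' : x j' ≠ m j') :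
    ∃ i, Governs a m x j i ∧ Governs a m x j' i := by
  by_contra! hdisj
  set y := stepToMedian m (stepToMedian m x j) j'
  have hxj' : stepToMedian m x j j' = x j' := Function.update_of_ne hjj'.symm _ _
  have hy : ∀ i, manhattanDist y (a i) = manhattanDist x (a i) +
      ((if Governs a m x j i then 1 else -1) + if Governs a m x j' i then 1 else -1) := by
    intro i
    rw [manhattanDist_stepToMedian a m _ j' (hxj' ▸ hj'), manhattanDist_stepToMedian a m x j hj]
    simp only [governs_congr hxj', add_assoc]
  have hyOPT : manhattanDistA a y = manhattanOPT a := by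
    refine le_antisymm ?_ (manhattanOPT_le a y)
    rw [← hx.1, ← add_zero (manhattanDistA a x)]
    refine manhattanDistA_le_add fun i => ?_
    rw [hy i]
    split_ifs with h h'
    · exact absurd h' (hdisj i h)
    all_goals omega
  have hsum := hx.2 y hyOPT
  rw [sum_congr rfl fun i _ => hy i, sum_add_distrib, sum_add_distrib, sum_ite_one_neg_one,
    sum_ite_one_neg_one, Fintype.card_fin] at hsum
  have := card_governs_le_two a π hπ m hm x j hj
  have := card_governs_le_two a π hπ m hm x j' hj'
  omega

end Manhattan

/-- for a sum-MSC sequence `x`, any two of the sets `G_j(x)` intersect. -/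
theorem stmt9 {ℓ : ℕ} (a : Fin 5 → Fin ℓ → ℤ) (π : Fin ℓ → Equiv.Perm (Fin 5))
    (hπ : ∀ j, Monotone fun p => a (π j p) j)
    (m : Fin ℓ → ℤ) (hm : ∀ j, m j = a (π j 2) j)
    (x : Fin ℓ → ℤ) (hx : IsSumMSC a x) (j j' : Fin ℓ) :
    (GovSet a m x j ∩ GovSet a m x j').Nonempty := by
  by_cases hj : x j = m j
  · obtain ⟨i, hi⟩ := exists_governs_of_manhattanDistA_eq hx.1 j'
    exact ⟨i, Or.inl hj, hi⟩
  by_cases hj' : x j' = m j'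
  · obtain ⟨i, hi⟩ := exists_governs_of_manhattanDistA_eq hx.1 j
    exact ⟨i, hi, Or.inl hj'⟩
  rcases eq_or_ne j j' with rfl | hjj'
  · obtain ⟨i, hi⟩ := exists_governs_of_manhattanDistA_eq hx.1 j
    exact ⟨i, hi, hi⟩
  · exact exists_governs_and_governs_of_isSumMSC a π hπ m hm hx hjj' hj hj'
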